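/- For A, B, C, D ∈ SL₂(K) with ABCD = I, setting x₁ = Tr(BC), x₂ = Tr(AC), x₃ = Tr(AB), G₁ = Tr(A), G₂ = Tr(B), G₃ = Tr(C), G₄ = Tr(D), the Fricke relation holds: x₁x₂x₃ + x₁² + x₂² + x₃² − (G₄G₁+G₂G₃)x₁ − (G₄G₂+G₁G₃)x₂ − (G₄G₃+G₂G₁)x₃ + G₁² + G₂² + G₃² + G₄² + G₁G₂G₃G₄ = 4. -/

import Mathlib

/-!
Since `D = (ABC)⁻¹` lies in `SL₂`, `Tr D = Tr (ABC)`. For 2×2 matrices, `Tr (ABC)` and `Tr (ACB)`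
are the two roots of a quadratic whose coefficients are polynomials in the traces of
`A, B, C, BC, AC, AB` (and the determinants): their sum and product are polynomial identities
in the entries. The Fricke relation is this quadratic evaluated at `Tr D = Tr (ABC)`.
-/

open Matrix

namespace Matrix

variable {R : Type*} [CommRing R]

theorem trace_adjugate_fin_two (M : Matrix (Fin 2) (Fin 2) R) : M.adjugate.trace = M.trace := by
  simp [adjugate_fin_two, trace_fin_two, add_comm]

theorem trace_eq_of_mul_eq_one_of_det_eq_one {M N : Matrix (Fin 2) (Fin 2) R}
    (h : M * N = 1) (hN : N.det = 1) : M.trace = N.trace := by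
  rw [← inv_eq_left_inv h, inv_def, hN, Ring.inverse_one, one_smul, trace_adjugate_fin_two]

theorem trace_mul_mul_add_trace_mul_mul_swap (A B C : Matrix (Fin 2) (Fin 2) R) :
    (A * B * C).trace + (A * C * B).trace =
      A.trace * (B * C).trace + B.trace * (A * C).trace + C.trace * (A * B).trace
        - A.trace * B.trace * C.trace := by
  simp only [trace_fin_two, mul_apply, Fin.sum_univ_two]
  ring

theorem trace_mul_mul_mul_trace_mul_mul_swap (A B C : Matrix (Fin 2) (Fin 2) R) :
    (A * B * C).trace * (A * C * B).trace =
      A.trace ^ 2 * B.det * C.det + B.trace ^ 2 * A.det * C.det + C.trace ^ 2 * A.det * B.det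
        + (B * C).trace ^ 2 * A.det + (A * C).trace ^ 2 * B.det + (A * B).trace ^ 2 * C.det
        + (B * C).trace * (A * C).trace * (A * B).trace
        - B.trace * C.trace * (B * C).trace * A.det - A.trace * C.trace * (A * C).trace * B.det
        - A.trace * B.trace * (A * B).trace * C.det - 4 * A.det * B.det * C.det := by
  simp only [trace_fin_two, det_fin_two, mul_apply, Fin.sum_univ_two]
  ring

end Matrix

/-- Fricke relation for four `SL₂` matrices with product the identity. -/
theorem fricke_relation {K : Type*} [Field K]
    (A B C D : Matrix (Fin 2) (Fin 2) K)
    (hA : A.det = 1) (hB : B.det = 1) (hC : C.det = 1) (hD : D.det = 1)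
    (hprod : A * B * C * D = 1)
    (x₁ x₂ x₃ G₁ G₂ G₃ G₄ : K)
    (hx₁ : x₁ = (B * C).trace) (hx₂ : x₂ = (A * C).trace) (hx₃ : x₃ = (A * B).trace)
    (hG₁ : G₁ = A.trace) (hG₂ : G₂ = B.trace) (hG₃ : G₃ = C.trace) (hG₄ : G₄ = D.trace) :
    x₁ * x₂ * x₃ + x₁^2 + x₂^2 + x₃^2
      - (G₄ * G₁ + G₂ * G₃) * x₁ - (G₄ * G₂ + G₁ * G₃) * x₂ - (G₄ * G₃ + G₂ * G₁) * x₃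
      + G₁^2 + G₂^2 + G₃^2 + G₄^2 + G₁ * G₂ * G₃ * G₄ = 4 := by
  have htrD : D.trace = (A * B * C).trace := (trace_eq_of_mul_eq_one_of_det_eq_one hprod hD).symm
  have hsum := trace_mul_mul_add_trace_mul_mul_swap A B C
  have hmul := trace_mul_mul_mul_trace_mul_mul_swap A B C
  rw [hA, hB, hC] at hmul
  subst hx₁ hx₂ hx₃ hG₁ hG₂ hG₃ hG₄
  rw [htrD]
  linear_combination (A * B * C).trace * hsum - hmul
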